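/- Under MRT precoding without PC, the ratio of the one-bit SQINR to the conventional SINR equals 4/π²: γ^{m,1^s}_{jk} / γ^{m,conv^s}_{jk} = 4/π². -/
import Mathlib


open Real Finset

/-- Under MRT precoding without PC, the ratio of the one-bit SQINR to the
conventional SINR equals `4/π²`, where `t^{FR^s} = (π/2) t^s`. -/
theorem stmt8 (L K M : ℕ) (hL : 1 ≤ L) (hK : 1 ≤ K) (hM : 1 ≤ M)
    (t : Fin L → Fin K → ℝ) (ht : ∀ l m, 0 < t l m)
    (β : Fin L → ℝ) (hβ : ∀ l, 0 < β l)
    (j : Fin L) (k : Fin K)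
    (Pt σ2 : ℝ) (hPt : 0 < Pt) (hσ2 : 0 < σ2)
    (tbar : Fin L → ℝ) (htbar : ∀ l, tbar l = ∑ m, t l m)
    (tFR : Fin L → Fin K → ℝ) (htFR : ∀ l m, tFR l m = Real.pi / 2 * t l m)
    (tFRbar : Fin L → ℝ) (htFRbar : ∀ l, tFRbar l = ∑ m, tFR l m)
    (γ1 γconv : ℝ)
    (hγ1 : γ1 = 1 /
      ((∑ l, (1 - 2 / Real.pi) * (Real.pi * tbar j * β l) / (2 * M * (t j k) ^ 2)) +
       (∑ l, ∑ m, tbar j * t l m * β l / (M * tbar l * (t j k) ^ 2)) +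
       Real.pi * σ2 * tbar j / (2 * M * Pt * (t j k) ^ 2)))
    (hγconv : γconv = 1 /
      ((∑ l, ∑ m, tFRbar j * tFR l m * β l / (M * tFRbar l * (tFR j k) ^ 2)) +
       σ2 * tFRbar j / (M * Pt * (tFR j k) ^ 2))) :
    γ1 / γconv = 4 / Real.pi ^ 2 := by
  haveI : NeZero K := ⟨by omega⟩
  haveI : NeZero L := ⟨by omega⟩
  have hπ : (0:ℝ) < Real.pi := Real.pi_pos
  have hM0 : (0:ℝ) < (M:ℝ) := by exact_mod_cast Nat.lt_of_lt_of_le Nat.zero_lt_one hM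
  have hx : 0 < t j k := ht j k
  have htb : ∀ l, 0 < tbar l := fun l => by
    rw [htbar l]; exact Finset.sum_pos (fun m _ => ht l m) Finset.univ_nonempty
  have hFRb : ∀ l, tFRbar l = Real.pi / 2 * tbar l := by
    intro l; rw [htFRbar, htbar, Finset.mul_sum]
    exact Finset.sum_congr rfl fun m _ => htFR l m
  set a := tbar j with ha
  have ha0 : 0 < a := htb j
  set S := ∑ l, β l with hS
  have hS0 : 0 < S := Finset.sum_pos (fun l _ => hβ l) Finset.univ_nonempty
  set x := t j k with hxdef
  set D := a * S / (M * x ^ 2) + σ2 * a / (M * Pt * x ^ 2) with hD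
  have hD0 : 0 < D := by positivity
  have h1 : γ1 = 1 / (Real.pi / 2 * D) := by
    rw [hγ1]; congr 1
    have inner : ∀ l, ∑ m, a * t l m * β l / (↑M * tbar l * x ^ 2)
        = a * β l / (↑M * x ^ 2) := by
      intro l
      have e : ∑ m, a * t l m * β l / (↑M * tbar l * x ^ 2)
          = (∑ m, t l m) * (a * β l / (↑M * tbar l * x ^ 2)) := by
        rw [Finset.sum_mul]; exact Finset.sum_congr rfl fun m _ => by ring
      rw [e, ← htbar l]
      have h := (htb l).ne'
      field_simp
    rw [Finset.sum_congr rfl (fun l _ => inner l)]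
    have e1 : ∑ l, (1 - 2 / Real.pi) * (Real.pi * a * β l) / (2 * ↑M * x ^ 2)
        = (1 - 2 / Real.pi) * Real.pi * a / (2 * ↑M * x ^ 2) * S := by
      rw [hS, Finset.mul_sum]; exact Finset.sum_congr rfl fun l _ => by ring
    have e2 : ∑ l, a * β l / (↑M * x ^ 2) = a / (↑M * x ^ 2) * S := by
      rw [hS, Finset.mul_sum]; exact Finset.sum_congr rfl fun l _ => by ring
    rw [e1, e2, hD]
    field_simp
    ring
  have h2 : γconv = 1 / (2 / Real.pi * D) := by
    rw [hγconv]; congr 1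
    have inner : ∀ l, ∑ m, tFRbar j * tFR l m * β l / (↑M * tFRbar l * (tFR j k) ^ 2)
        = 2 * a * β l / (Real.pi * ↑M * x ^ 2) := by
      intro l
      have e : ∑ m, tFRbar j * tFR l m * β l / (↑M * tFRbar l * (tFR j k) ^ 2)
          = (∑ m, tFR l m) * (tFRbar j * β l / (↑M * tFRbar l * (tFR j k) ^ 2)) := by
        rw [Finset.sum_mul]; exact Finset.sum_congr rfl fun m _ => by ring
      rw [e, ← htFRbar l, hFRb l, hFRb j, htFR j k, ← ha, ← hxdef]
      have h := (htb l).ne'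
      field_simp
    rw [Finset.sum_congr rfl (fun l _ => inner l)]
    have e1 : ∑ l, 2 * a * β l / (Real.pi * ↑M * x ^ 2)
        = 2 * a / (Real.pi * ↑M * x ^ 2) * S := by
      rw [hS, Finset.mul_sum]; exact Finset.sum_congr rfl fun l _ => by ring
    rw [e1, hFRb j, htFR j k, ← ha, ← hxdef, hD]
    field_simp
  rw [h1, h2]
  have hπ2 : (Real.pi:ℝ) ≠ 0 := hπ.ne'
  have hD2 : D ≠ 0 := hD0.ne'
  field_simp
  ring
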